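/- arXiv:2305.03000 — 7 statements merged into one kernel-verified Lean document; each statement's English description precedes it below -/
import Mathlib

section
/- Let n ≥ p ≥ 1 and k ≥ 2 be integers with n ≤ 2p, and let u be a length-p word over the alphabet Σ_k = {1,2,...,k}. Let a[1..p] be the unbordered prefix indicator of u and let b[1..p] be the border indicator of u. Then B_k(u,n) = (∑_{i=1}^{n-p} a[i]·k^{n-p-i}) + (∑_{i=n-p+1}^{⌊n/2⌋} a[i]·b[i-(n-p)]). -/
/-- `u` is a border of `w`: `u` is both a non-empty proper prefix
and a non-empty proper suffix of `w`. -/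
def IsBorder {α : Type*} (u w : List α) : Prop :=
  u ≠ [] ∧ u.length < w.length ∧ u <+: w ∧ u <:+ w

/-- A word is bordered if it has a border. -/
def Bordered {α : Type*} (w : List α) : Prop := ∃ u, IsBorder u w

/-- A word is unbordered if it has no border. -/
def Unbordered {α : Type*} (w : List α) : Prop := ¬ Bordered w

/-- `u` is a shortest border of `w`: a border of `w` of minimum length. -/
def IsShortestBorder {α : Type*} (u w : List α) : Prop :=
  IsBorder u w ∧ ∀ v, IsBorder v w → u.length ≤ v.length

/-- `B k u n`: the number of length-`n` bordered words over the `k`-letter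
alphabet `Fin k` that have `u` as a prefix. -/
noncomputable def B (k : ℕ) (u : List (Fin k)) (n : ℕ) : ℕ :=
  Nat.card {w : List (Fin k) // w.length = n ∧ u <+: w ∧ Bordered w}

open scoped Classical in
/-- Unbordered prefix indicator: `upInd k u i = 1` iff the length-`i` prefix
of `u` is unbordered. -/
noncomputable def upInd (k : ℕ) (u : List (Fin k)) (i : ℕ) : ℕ :=
  if Unbordered (u.take i) then 1 else 0

open scoped Classical in
/-- Border indicator: `bInd k u i = 1` iff `u` has a border of length `i`. -/
noncomputable def bInd (k : ℕ) (u : List (Fin k)) (i : ℕ) : ℕ :=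
  if ∃ v, IsBorder v u ∧ v.length = i then 1 else 0

/-!
A bordered word has a shortest border, which is unbordered and at most half as long as the
word; conversely an unbordered border is the shortest one. Sort the bordered length-`n` words with
prefix `u` by the length `i ≤ n / 2 ≤ p` of their shortest border: that border is then
`u.take i`, so the class of `i` is empty unless `u.take i` is unbordered, and otherwise consists
of all length-`n` words with prefix `u` and suffix `u.take i`. For `i ≤ n - p` these are the
words `u ++ m ++ u.take i` with `m` free of length `n - p - i`. For `i > n - p` prefix and suffix
overlap in `j = i - (n - p)` letters, so there is exactly one such word if `u.take j` is a suffix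
of `u`, i.e. if `u` has a border of length `j`, and none otherwise.
-/

section ListOverlap

variable {α : Type*} {x y w : List α}

theorem exists_eq_append_append_of_prefix_of_suffix (hx : x <+: w) (hy : y <:+ w)
    (h : x.length + y.length ≤ w.length) : ∃ m, w = x ++ m ++ y := by
  obtain ⟨t, rfl⟩ := hx
  obtain ⟨m, rfl⟩ : y <:+ t := List.suffix_of_suffix_length_le hy (List.suffix_append x t)
    (by simp only [List.length_append] at h; omega)
  exact ⟨m, (List.append_assoc _ _ _).symm⟩

theorem prefix_and_suffix_iff_of_le_add (h : w.length ≤ x.length + y.length) :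
    x <+: w ∧ y <:+ w ↔ w = x ++ y.drop (x.length + y.length - w.length) ∧
      y.take (x.length + y.length - w.length) <:+ x := by
  constructor
  · rintro ⟨⟨t, rfl⟩, ⟨s, hs⟩⟩
    rcases List.append_eq_append_iff.mp hs with ⟨a, rfl, rfl⟩ | ⟨b, rfl, rfl⟩
    · have hd : (s ++ a).length + (a ++ t).length - (s ++ a ++ t).length = a.length := by
        simp only [List.length_append]
        omega
      rw [hd, List.take_left' rfl, List.drop_left' rfl]
      exact ⟨rfl, List.suffix_append s a⟩
    · simp only [List.length_append] at h
      obtain rfl : b = [] := List.eq_nil_of_length_eq_zero (by omega)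
      simp
  · rintro ⟨hw, s, hs⟩
    generalize x.length + y.length - w.length = d at hw hs
    subst hw hs
    exact ⟨List.prefix_append _ _, s, by rw [List.append_assoc, List.take_append_drop]⟩

end ListOverlap

namespace IsBorder

variable {α : Type*} {x v w : List α}

theorem trans (hx : IsBorder x v) (hv : IsBorder v w) : IsBorder x w :=
  ⟨hx.1, hx.2.1.trans hv.2.1, hx.2.2.1.trans hv.2.2.1, hx.2.2.2.trans hv.2.2.2⟩

theorem of_length_lt (hx : IsBorder x w) (hv : IsBorder v w) (h : x.length < v.length) :
    IsBorder x v :=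
  ⟨hx.1, h, List.prefix_of_prefix_length_le hx.2.2.1 hv.2.2.1 h.le,
    List.suffix_of_suffix_length_le hx.2.2.2 hv.2.2.2 h.le⟩

end IsBorder

section Words

variable {α : Type*} {u v w : List α} {i : ℕ}

theorem isShortestBorder_iff : IsShortestBorder v w ↔ IsBorder v w ∧ Unbordered v := by
  constructor
  · rintro ⟨hv, hmin⟩
    refine ⟨hv, fun ⟨x, hx⟩ => ?_⟩
    have := hmin x (hx.trans hv)
    have := hx.2.1
    omega
  · rintro ⟨hv, hunb⟩
    refine ⟨hv, fun x hx => ?_⟩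
    by_contra! h
    exact hunb ⟨x, hx.of_length_lt hv h⟩

/-- If the occurrences of `v` as prefix and suffix of `w` overlapped, then for `d = |w| - |v|` the
word `v.drop d = v.take (|v| - d)` would be a border of `v`. -/
theorem Unbordered.two_mul_length_le (hunb : Unbordered v) (hv : IsBorder v w) :
    2 * v.length ≤ w.length := by
  obtain ⟨hne, hlt, hpre, hsuf⟩ := hv
  by_contra! h
  set d := w.length - v.length
  have hv_take : v = w.take v.length := List.prefix_iff_eq_take.mp hpre
  have hv_drop : v = w.drop d := List.suffix_iff_eq_drop.mp hsuf
  have hdrop_eq_take : v.drop d = v.take (v.length - d) :=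
    calc v.drop d = (w.take v.length).drop d := by rw [← hv_take]
      _ = (w.drop d).take (v.length - d) := List.drop_take
      _ = v.take (v.length - d) := by rw [← hv_drop]
  refine hunb ⟨v.drop d, ?_, ?_, ?_, List.drop_suffix d v⟩
  · rw [← List.length_pos_iff, List.length_drop]; omega
  · rw [List.length_drop]; omega
  · rw [hdrop_eq_take]; exact List.take_prefix _ _

theorem IsShortestBorder.two_mul_length_le (h : IsShortestBorder v w) :
    2 * v.length ≤ w.length :=
  (isShortestBorder_iff.mp h).2.two_mul_length_le h.1

/-- Takes the junk value `sInf ∅ = 0` when `w` is unbordered. -/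
noncomputable def shortestBorderLength (w : List α) : ℕ :=
  sInf {i | ∃ v, IsBorder v w ∧ v.length = i}

theorem shortestBorderLength_le (hv : IsBorder v w) : shortestBorderLength w ≤ v.length :=
  Nat.sInf_le ⟨v, hv, rfl⟩

theorem Bordered.exists_isBorder_length_eq (hw : Bordered w) :
    ∃ v, IsBorder v w ∧ v.length = shortestBorderLength w :=
  Nat.sInf_mem (s := {i | ∃ v, IsBorder v w ∧ v.length = i})
    (hw.elim fun v hv => ⟨_, v, hv, rfl⟩)

theorem Bordered.exists_isShortestBorder (hw : Bordered w) : ∃ v, IsShortestBorder v w := by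
  obtain ⟨v, hv, hvl⟩ := hw.exists_isBorder_length_eq
  exact ⟨v, hv, fun x hx => hvl ▸ shortestBorderLength_le hx⟩

theorem IsShortestBorder.shortestBorderLength_eq (h : IsShortestBorder v w) :
    shortestBorderLength w = v.length := by
  obtain ⟨x, hx, hxl⟩ := Bordered.exists_isBorder_length_eq ⟨v, h.1⟩
  exact (shortestBorderLength_le h.1).antisymm (hxl ▸ h.2 x hx)

theorem Bordered.shortestBorderLength_mem_Icc (hw : Bordered w) :
    shortestBorderLength w ∈ Finset.Icc 1 (w.length / 2) := by
  obtain ⟨v, hv⟩ := hw.exists_isShortestBorder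
  have hpos := List.length_pos_iff.mpr hv.1.1
  have := hv.two_mul_length_le
  rw [hv.shortestBorderLength_eq, Finset.mem_Icc]
  omega

theorem bordered_and_shortestBorderLength_eq_iff (hu : u <+: w) (hi : 0 < i)
    (hiu : i ≤ u.length) (hiw : i < w.length) :
    Bordered w ∧ shortestBorderLength w = i ↔ Unbordered (u.take i) ∧ u.take i <:+ w := by
  have hlen : (u.take i).length = i := List.length_take_of_le hiu
  constructor
  · rintro ⟨hw, hwi⟩
    obtain ⟨v, hv⟩ := hw.exists_isShortestBorder
    have hvi : v.length = i := hv.shortestBorderLength_eq ▸ hwi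
    have hvu : v = u.take i :=
      hvi ▸ List.prefix_iff_eq_take.mp (List.prefix_of_prefix_length_le hv.1.2.2.1 hu (by omega))
    rw [← hvu]
    exact ⟨(isShortestBorder_iff.mp hv).2, hv.1.2.2.2⟩
  · rintro ⟨hunb, hsuf⟩
    have hborder : IsBorder (u.take i) w :=
      ⟨List.ne_nil_of_length_pos (by omega), by omega, (List.take_prefix i u).trans hu, hsuf⟩
    refine ⟨⟨_, hborder⟩, ?_⟩
    rw [(isShortestBorder_iff.mpr ⟨hborder, hunb⟩).shortestBorderLength_eq, hlen]

theorem exists_isBorder_length_eq_iff (hi : 0 < i) (hiw : i < w.length) :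
    (∃ v, IsBorder v w ∧ v.length = i) ↔ w.take i <:+ w := by
  constructor
  · rintro ⟨v, hv, rfl⟩
    exact List.prefix_iff_eq_take.mp hv.2.2.1 ▸ hv.2.2.2
  · intro h
    have hlen : (w.take i).length = i := List.length_take_of_le hiw.le
    exact ⟨w.take i, ⟨List.ne_nil_of_length_pos (by omega), by omega,
      List.take_prefix i w, h⟩, hlen⟩

end Words

section Counting

open Finset
open scoped Classical

variable {α : Type*} [Fintype α] [DecidableEq α] {n : ℕ}

omit [DecidableEq α] in
theorem natCard_length_eq_and (P : List α → Prop) [DecidablePred P] :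
    Nat.card {w : List α // w.length = n ∧ P w} = #{v : List.Vector α n | P v.toList} := by
  let e : {v : List.Vector α n // P v.toList} ≃ {w : List α // w.length = n ∧ P w} :=
    Equiv.subtypeSubtypeEquivSubtypeInter _ _
  rw [← Nat.card_congr e, Nat.card_eq_fintype_card, Fintype.card_subtype]

theorem card_filter_prefix_suffix_of_add_le (x y : List α) (h : x.length + y.length ≤ n) :
    #{v : List.Vector α n | x <+: v.toList ∧ y <:+ v.toList}
      = Fintype.card α ^ (n - x.length - y.length) := by
  let f (m : List.Vector α (n - x.length - y.length)) : List.Vector α n :=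
    ⟨x ++ m.toList ++ y, by simp only [List.length_append, m.toList_length]; omega⟩
  have hf : Function.Injective f := fun m m' hmm => by
    apply List.Vector.toList_injective
    simpa [f] using congrArg List.Vector.toList hmm
  have himage :
      ({v | x <+: v.toList ∧ y <:+ v.toList} : Finset (List.Vector α n)) = univ.image f := by
    ext v
    simp only [mem_filter, mem_univ, true_and, mem_image]
    constructor
    · rintro ⟨hx, hy⟩
      obtain ⟨m, hm⟩ := exists_eq_append_append_of_prefix_of_suffix hx hy (by simpa using h)
      refine ⟨⟨m, ?_⟩, List.Vector.toList_injective hm.symm⟩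
      have := congrArg List.length hm
      simp only [List.length_append, List.Vector.toList_length] at this
      omega
    · rintro ⟨m, rfl⟩
      exact ⟨(List.prefix_append x m.toList).trans (List.prefix_append _ y),
        List.suffix_append _ _⟩
  rw [himage, card_image_of_injective _ hf, card_univ, card_vector]

theorem card_filter_prefix_suffix_of_le_add (x y : List α) (hx : x.length ≤ n)
    (h : n ≤ x.length + y.length) :
    #{v : List.Vector α n | x <+: v.toList ∧ y <:+ v.toList}
      = if y.take (x.length + y.length - n) <:+ x then 1 else 0 := by
  have hiff (v : List.Vector α n) : x <+: v.toList ∧ y <:+ v.toList ↔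
      v.toList = x ++ y.drop (x.length + y.length - n) ∧ y.take (x.length + y.length - n) <:+ x :=
    by simpa only [v.toList_length] using
      prefix_and_suffix_iff_of_le_add (w := v.toList) (by rwa [v.toList_length])
  split_ifs with hoverlap
  · let w : List.Vector α n :=
      ⟨x ++ y.drop (x.length + y.length - n), by
        simp only [List.length_append, List.length_drop]; omega⟩
    refine card_eq_one.mpr ⟨w, eq_singleton_iff_unique_mem.mpr ⟨?_, fun v hv => ?_⟩⟩
    · exact mem_filter.mpr ⟨mem_univ w, (hiff w).mpr ⟨rfl, hoverlap⟩⟩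
    · exact List.Vector.toList_injective ((hiff v).mp (mem_filter.mp hv).2).1
  · exact card_eq_zero.mpr (filter_eq_empty_iff.mpr fun v _ hv => hoverlap ((hiff v).mp hv).2)

theorem card_filter_prefix_bordered_eq_sum (u : List α) (hn : n ≤ 2 * u.length) :
    #{v : List.Vector α n | u <+: v.toList ∧ Bordered v.toList}
      = ∑ i ∈ Icc 1 (n / 2), if Unbordered (u.take i)
          then #{v : List.Vector α n | u <+: v.toList ∧ u.take i <:+ v.toList} else 0 := by
  rw [card_eq_sum_card_fiberwise (f := fun v => shortestBorderLength v.toList)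
    (t := Icc 1 (n / 2)) fun v hv => by
      simpa using (mem_filter.mp hv).2.2.shortestBorderLength_mem_Icc]
  refine sum_congr rfl fun i hi => ?_
  rw [mem_Icc] at hi
  have hfiber : ∀ v ∈ (univ : Finset (List.Vector α n)),
      (u <+: v.toList ∧ Bordered v.toList) ∧ shortestBorderLength v.toList = i ↔
        Unbordered (u.take i) ∧ u <+: v.toList ∧ u.take i <:+ v.toList := fun v _ => by
    by_cases hu : u <+: v.toList
    · simp only [hu, true_and]
      exact bordered_and_shortestBorderLength_eq_iff hu (by omega) (by omega)
        (by rw [v.toList_length]; omega)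
    · simp [hu]
  rw [filter_filter, filter_congr hfiber]
  by_cases hunb : Unbordered (u.take i) <;> simp [hunb]

end Counting

section Recurrence

open Finset
open scoped Classical

variable {k n p i : ℕ} {u : List (Fin k)}

theorem ite_card_eq_upInd_mul_pow (hu : u.length = p) (hn : n ≤ 2 * p)
    (hi : i ∈ Icc 1 (n - p)) :
    (if Unbordered (u.take i)
      then #{v : List.Vector (Fin k) n | u <+: v.toList ∧ u.take i <:+ v.toList} else 0)
      = upInd k u i * k ^ (n - p - i) := by
  rw [mem_Icc] at hi
  have hlen : (u.take i).length = i := List.length_take_of_le (by omega)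
  rw [card_filter_prefix_suffix_of_add_le u (u.take i) (by omega), Fintype.card_fin, hu, hlen,
    upInd]
  split_ifs <;> simp

theorem ite_card_eq_upInd_mul_bInd (hu : u.length = p) (hpn : p ≤ n) (hn : n ≤ 2 * p)
    (hi : i ∈ Icc (n - p + 1) (n / 2)) :
    (if Unbordered (u.take i)
      then #{v : List.Vector (Fin k) n | u <+: v.toList ∧ u.take i <:+ v.toList} else 0)
      = upInd k u i * bInd k u (i - (n - p)) := by
  rw [mem_Icc] at hi
  have hlen : (u.take i).length = i := List.length_take_of_le (by omega)
  have hoverlap : (u.take i).take (p + i - n) = u.take (i - (n - p)) := by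
    rw [List.take_take]
    congr 1
    omega
  rw [card_filter_prefix_suffix_of_le_add u (u.take i) (by omega) (by omega), hu, hlen, hoverlap,
    upInd, bInd, exists_isBorder_length_eq_iff (by omega) (by omega)]
  split_ifs <;> simp

end Recurrence

theorem B_recurrence_le_general (k n p : ℕ) (hpn : p ≤ n)
    (hn2p : n ≤ 2 * p) (u : List (Fin k)) (hu : u.length = p) :
    B k u n = (∑ i ∈ Finset.Icc 1 (n - p), upInd k u i * k ^ (n - p - i))
      + ∑ i ∈ Finset.Icc (n - p + 1) (n / 2), upInd k u i * bInd k u (i - (n - p)) := by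
  classical
  have hsplit : Finset.Icc 1 (n / 2) = Finset.Icc 1 (n - p) ∪ Finset.Icc (n - p + 1) (n / 2) := by
    ext
    simp only [Finset.mem_union, Finset.mem_Icc]
    omega
  have hdisjoint : Disjoint (Finset.Icc 1 (n - p)) (Finset.Icc (n - p + 1) (n / 2)) :=
    Finset.disjoint_left.mpr fun i h₁ h₂ => by
      simp only [Finset.mem_Icc] at h₁ h₂
      omega
  rw [B, natCard_length_eq_and, card_filter_prefix_bordered_eq_sum u (hu ▸ hn2p), hsplit,
    Finset.sum_union hdisjoint]
  congr 1 <;> refine Finset.sum_congr rfl fun i hi => ?_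
  · exact ite_card_eq_upInd_mul_pow hu hn2p hi
  · exact ite_card_eq_upInd_mul_bInd hu hpn hn2p hi

/-- Recurrence for `B_k(u,n)` in the case `n ≤ 2p`. -/
theorem B_recurrence_le (k n p : ℕ) (hk : 2 ≤ k) (hp : 1 ≤ p) (hpn : p ≤ n)
    (hn2p : n ≤ 2 * p) (u : List (Fin k)) (hu : u.length = p) :
    B k u n = (∑ i ∈ Finset.Icc 1 (n - p), upInd k u i * k ^ (n - p - i))
      + ∑ i ∈ Finset.Icc (n - p + 1) (n / 2), upInd k u i * bInd k u (i - (n - p)) :=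
  B_recurrence_le_general k n p hpn hn2p u hu
end

section
/- Let n ≥ p ≥ 1 and k ≥ 2 be integers with n > 2p, and let u be a length-p word over the alphabet Σ_k = {1,2,...,k}. Let a[1..p] be the unbordered prefix indicator of u. Then B_k(u,n) = (∑_{i=1}^{p} a[i]·k^{n-p-i}) + (∑_{i=p+1}^{⌊n/2⌋} (k^{i-p} - B_k(u,i))·k^{n-2i}). -/
section BorderAux
variable {α : Type*}

/-- a border of a border is a border -/
lemma isBorder_trans {x v w : List α} (hx : IsBorder x v) (hv : IsBorder v w) : IsBorder x w :=
  ⟨hx.1, hx.2.1.trans hv.2.1, hx.2.2.1.trans hv.2.2.1, hx.2.2.2.trans hv.2.2.2⟩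

/-- the shorter of two borders is a border of the longer -/
lemma isBorder_of_borders {v v' w : List α} (h : IsBorder v w) (h' : IsBorder v' w)
    (hlt : v.length < v'.length) : IsBorder v v' := by
  refine ⟨h.1, hlt, ?_, ?_⟩
  · exact List.prefix_of_prefix_length_le h.2.2.1 h'.2.2.1 hlt.le
  · exact List.suffix_of_suffix_length_le h.2.2.2 h'.2.2.2 hlt.le

/-- an unbordered border is a shortest border -/
lemma unbordered_border_min {v v' w : List α} (h : IsBorder v w) (hub : Unbordered v)
    (h' : IsBorder v' w) : v.length ≤ v'.length := by
  by_contra hlt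
  exact hub ⟨v', isBorder_of_borders h' h (by omega)⟩

lemma unbordered_border_length_unique {v v' w : List α} (h : IsBorder v w) (hub : Unbordered v)
    (h' : IsBorder v' w) (hub' : Unbordered v') : v.length = v'.length :=
  le_antisymm (unbordered_border_min h hub h') (unbordered_border_min h' hub' h)

/-- an unbordered border occupies at most half the word -/
lemma unbordered_border_two_mul_le {v w : List α} (h : IsBorder v w) (hub : Unbordered v) :
    2 * v.length ≤ w.length := by
  by_contra hcon
  obtain ⟨hne, hlen, hpre, hsuf⟩ := h
  obtain ⟨t, ht⟩ := hsuf   -- t ++ v = w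
  have htlen : t.length = w.length - v.length := by
    have := congrArg List.length ht; simp at this; omega
  have htw : t <+: w := ⟨v, ht⟩
  have htv : t <+: v := List.prefix_of_prefix_length_le htw hpre (by omega)
  obtain ⟨r, hr⟩ := htv     -- t ++ r = v
  obtain ⟨s, hs⟩ := hpre    -- v ++ s = w
  have hvrs : v = r ++ s := by
    apply List.append_cancel_left (as := t)
    rw [← List.append_assoc, hr, hs, ht]
  apply hub
  refine ⟨r, ?_, ?_, ⟨s, hvrs.symm⟩, ⟨t, hr⟩⟩
  · intro hrnil
    have := congrArg List.length hr; simp [hrnil] at this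
    omega
  · have := congrArg List.length hr; simp at this
    have hvne : v.length ≠ 0 := by simp [List.length_eq_zero_iff]; exact hne
    omega

/-- shortest border length -/
noncomputable def sbl (w : List α) : ℕ := sInf {i | ∃ v, IsBorder v w ∧ v.length = i}

lemma sbl_spec {w : List α} (h : Bordered w) :
    ∃ v, IsBorder v w ∧ Unbordered v ∧ v.length = sbl w := by
  obtain ⟨v0, hv0⟩ := h
  have hne : {i | ∃ v, IsBorder v w ∧ v.length = i}.Nonempty := ⟨v0.length, v0, hv0, rfl⟩
  obtain ⟨v, hv, hvl⟩ := Nat.sInf_mem hne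
  refine ⟨v, hv, ?_, hvl⟩
  rintro ⟨x, hx⟩
  have hxw : IsBorder x w := isBorder_trans hx hv
  have h2 := Nat.sInf_le (s := {i | ∃ v, IsBorder v w ∧ v.length = i}) ⟨x, hxw, rfl⟩
  have h1 : x.length < v.length := hx.2.1
  omega

end BorderAux

section Count
variable {k : ℕ}

lemma finite_words (n : ℕ) (P : List (Fin k) → Prop) :
    Finite {w : List (Fin k) // w.length = n ∧ P w} := by
  haveI : Finite {l : List (Fin k) // l.length = n} :=
    (inferInstance : Finite (List.Vector (Fin k) n))
  apply Finite.of_injective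
    (fun w : {w : List (Fin k) // w.length = n ∧ P w} =>
      (⟨w.1, w.2.1⟩ : {l : List (Fin k) // l.length = n}))
  intro a b h
  simp only [Subtype.mk.injEq] at h
  exact Subtype.ext h

lemma card_words (n : ℕ) : Nat.card {w : List (Fin k) // w.length = n} = k ^ n := by
  have h : Nat.card {w : List (Fin k) // w.length = n}
      = Nat.card (List.Vector (Fin k) n) := rfl
  rw [h, Nat.card_eq_fintype_card, card_vector, Fintype.card_fin]

lemma card_prefix (u : List (Fin k)) (i : ℕ) (hpi : u.length ≤ i) :
    Nat.card {x : List (Fin k) // x.length = i ∧ u <+: x} = k ^ (i - u.length) := by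
  rw [← card_words (k := k) (i - u.length)]
  apply Nat.card_congr
  refine ⟨fun x => ⟨x.1.drop u.length, by simp [x.2.1]⟩,
          fun s => ⟨u ++ s.1, by simp [s.2]; omega, List.prefix_append _ _⟩, ?_, ?_⟩
  · rintro ⟨x, hxl, hxp⟩
    apply Subtype.ext
    obtain ⟨t, ht⟩ := hxp
    simp only [← ht, List.drop_left]
  · rintro ⟨s, hs⟩
    apply Subtype.ext
    simp only [List.drop_left]

lemma card_unbordered_prefix (u : List (Fin k)) (i : ℕ) (hpi : u.length ≤ i) :
    Nat.card {x : List (Fin k) // x.length = i ∧ u <+: x ∧ Unbordered x}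
      = k ^ (i - u.length) - B k u i := by
  classical
  set T : Set (List (Fin k)) := {x | x.length = i ∧ u <+: x} with hT
  set S : Set (List (Fin k)) := {x | x.length = i ∧ u <+: x ∧ Bordered x} with hS
  have hsub : S ⊆ T := fun x hx => ⟨hx.1, hx.2.1⟩
  have hSfin : S.Finite := Set.finite_coe_iff.mp (finite_words i _)
  have e : {x : List (Fin k) // x.length = i ∧ u <+: x ∧ Unbordered x} ≃ ↥(T \ S) :=
    Equiv.subtypeEquivRight (by
      intro x
      simp only [hT, hS, Set.mem_diff, Set.mem_setOf_eq, Unbordered]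
      tauto)
  rw [Nat.card_congr e, Nat.card_coe_set_eq, Set.ncard_diff hsub hSfin]
  have h1 : T.ncard = k ^ (i - u.length) := by
    rw [← Nat.card_coe_set_eq, ← card_prefix u i hpi]
    rfl
  have h2 : S.ncard = B k u i := by
    rw [← Nat.card_coe_set_eq, B]
    rfl
  rw [h1, h2]

/-- a word has an unbordered border of length `i` -/
def UB {k : ℕ} (w : List (Fin k)) (i : ℕ) : Prop :=
  ∃ v, IsBorder v w ∧ Unbordered v ∧ v.length = i

lemma card_partition (u : List (Fin k)) (n : ℕ) :
    B k u n = ∑ i ∈ Finset.Icc 1 (n / 2),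
      Nat.card {w : List (Fin k) // w.length = n ∧ u <+: w ∧ UB w i} := by
  classical
  haveI inst : ∀ i : ℕ, Fintype {w : List (Fin k) // w.length = n ∧ u <+: w ∧ UB w i} :=
    fun i => @Fintype.ofFinite _ (finite_words n _)
  have e : {w : List (Fin k) // w.length = n ∧ u <+: w ∧ Bordered w}
      ≃ Σ i : (Finset.Icc 1 (n / 2) : Finset ℕ),
          {w : List (Fin k) // w.length = n ∧ u <+: w ∧ UB w i.1} := by
    apply Equiv.symm
    apply Equiv.ofBijective
      (f := fun x => ⟨x.2.1, x.2.2.1, x.2.2.2.1, x.2.2.2.2.elim (fun v hv => ⟨v, hv.1⟩)⟩)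
    constructor
    · rintro ⟨⟨i₁, hi₁⟩, w₁, hl₁, hp₁, hub₁⟩ ⟨⟨i₂, hi₂⟩, w₂, hl₂, hp₂, hub₂⟩ h
      have hw : w₁ = w₂ := Subtype.ext_iff.mp h
      subst hw
      obtain ⟨v₁, hv₁, hb₁, hvl₁⟩ := hub₁
      obtain ⟨v₂, hv₂, hb₂, hvl₂⟩ := hub₂
      have hi : i₁ = i₂ := by
        have hlen := unbordered_border_length_unique hv₁ hb₁ hv₂ hb₂
        rw [hvl₁, hvl₂] at hlen
        exact hlen
      subst hi
      rfl
    · rintro ⟨w, hl, hp, hb⟩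
      obtain ⟨v, hv, hvub, hvl⟩ := sbl_spec hb
      have h2 := unbordered_border_two_mul_le hv hvub
      have h0 : 0 < v.length := List.length_pos_iff.mpr hv.1
      refine ⟨⟨⟨sbl w, ?_⟩, ⟨w, hl, hp, ⟨v, hv, hvub, hvl⟩⟩⟩, rfl⟩
      rw [Finset.mem_Icc]
      refine ⟨by omega, ?_⟩
      rw [Nat.le_div_iff_mul_le (by norm_num)]
      omega
  rw [B, Nat.card_congr e, Nat.card_eq_fintype_card, Fintype.card_sigma,
      ← Finset.sum_coe_sort (Finset.Icc 1 (n / 2))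
        (fun i => Nat.card {w : List (Fin k) // w.length = n ∧ u <+: w ∧ UB w i})]
  exact Finset.sum_congr rfl fun i _ => (Nat.card_eq_fintype_card).symm

lemma card_small (u : List (Fin k)) (n i : ℕ) (hp : 1 ≤ u.length)
    (h1 : 1 ≤ i) (hip : i ≤ u.length) (hn : 2 * u.length < n) :
    Nat.card {w : List (Fin k) // w.length = n ∧ u <+: w ∧ UB w i}
      = upInd k u i * k ^ (n - u.length - i) := by
  classical
  have hune : u ≠ [] := by
    intro h; rw [h] at hp; simp at hp
  by_cases hub : Unbordered (u.take i)
  · have hupi : upInd k u i = 1 := by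
      unfold upInd; rw [if_pos hub]
    rw [hupi, one_mul, ← card_words (k := k) (n - u.length - i)]
    apply Nat.card_congr
    refine ⟨fun w => ⟨(w.1.drop u.length).take (n - u.length - i), by simp [w.2.1]⟩,
            fun m => ⟨u ++ m.1 ++ u.take i, ?_, ?_, ?_⟩, ?_, ?_⟩
    · simp [m.2]
      omega
    · rw [List.append_assoc]; exact List.prefix_append _ _
    · refine ⟨u.take i, ⟨?_, ?_, ?_, ?_⟩, hub, by simp; omega⟩
      · simp [List.take_eq_nil_iff]
        exact ⟨by omega, hune⟩
      · simp [m.2]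
        omega
      · exact (List.take_prefix i u).trans
          ⟨m.1 ++ u.take i, (List.append_assoc _ _ _).symm⟩
      · exact ⟨u ++ m.1, rfl⟩
    · rintro ⟨w, hwl, hwp, v, hv, hvub, hvl⟩
      apply Subtype.ext
      simp only
      have hup : u = w.take u.length := List.prefix_iff_eq_take.mp hwp
      have hvt : v = w.take i := by
        have := List.prefix_iff_eq_take.mp hv.2.2.1
        rwa [hvl] at this
      have hvd : v = w.drop (n - i) := by
        have := List.suffix_iff_eq_drop.mp hv.2.2.2
        rwa [hwl, hvl] at this
      have hti : u.take i = w.take i := by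
        rw [hup, List.take_take, min_eq_left hip]
      rw [hti, ← hvt, hvd]
      have key : (w.drop u.length).take (n - u.length - i) ++ w.drop (n - i)
          = w.drop u.length := by
        have h' : u.length + (n - u.length - i) = n - i := by omega
        rw [← h', ← List.drop_drop]
        exact List.take_append_drop _ _
      conv_lhs => rw [List.append_assoc, key]
      nth_rewrite 1 [hup]
      exact List.take_append_drop _ _
    · rintro ⟨m, hm⟩
      apply Subtype.ext
      simp only
      rw [List.append_assoc, List.drop_left, List.take_left' hm]
  · have hupi : upInd k u i = 0 := by
      unfold upInd; rw [if_neg hub]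
    rw [hupi, zero_mul]
    have : IsEmpty {w : List (Fin k) // w.length = n ∧ u <+: w ∧ UB w i} := by
      constructor
      rintro ⟨w, hwl, hwp, v, hv, hvub, hvl⟩
      apply hub
      have hvu : v <+: u := List.prefix_of_prefix_length_le hv.2.2.1 hwp (by omega)
      have hveq : v = u.take i := by
        have := List.prefix_iff_eq_take.mp hvu
        rwa [hvl] at this
      rwa [hveq] at hvub
    exact Nat.card_of_isEmpty

lemma card_large (u : List (Fin k)) (n i : ℕ) (hp : 1 ≤ u.length)
    (hpi : u.length < i) (hin : 2 * i ≤ n) :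
    Nat.card {w : List (Fin k) // w.length = n ∧ u <+: w ∧ UB w i}
      = (k ^ (i - u.length) - B k u i) * k ^ (n - 2 * i) := by
  rw [← card_unbordered_prefix u i (by omega), ← card_words (k := k) (n - 2 * i),
      ← Nat.card_prod]
  apply Nat.card_congr
  refine ⟨fun w => (⟨w.1.take i, ?_, ?_, ?_⟩, ⟨(w.1.drop i).take (n - 2 * i), by simp [w.2.1]; omega⟩),
          fun x => ⟨x.1.1 ++ x.2.1 ++ x.1.1, ?_, ?_, ?_⟩, ?_, ?_⟩
  · simp [w.2.1]; omega
  · have hup : u = w.1.take u.length := List.prefix_iff_eq_take.mp w.2.2.1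
    rw [List.prefix_iff_eq_take]
    rw [List.take_take, min_eq_left hpi.le, ← hup]
  · obtain ⟨v, hv, hvub, hvl⟩ := w.2.2.2
    have hvt : v = w.1.take i := by
      have := List.prefix_iff_eq_take.mp hv.2.2.1
      rwa [hvl] at this
    rwa [← hvt]
  · simp [x.1.2.1, x.2.2]
    omega
  · exact x.1.2.2.1.trans ⟨x.2.1 ++ x.1.1, (List.append_assoc _ _ _).symm⟩
  · refine ⟨x.1.1, ⟨?_, ?_, ?_, ?_⟩, x.1.2.2.2, x.1.2.1⟩
    · intro h
      have := congrArg List.length h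
      simp [x.1.2.1] at this
      omega
    · simp [x.1.2.1, x.2.2]
      omega
    · exact ⟨x.2.1 ++ x.1.1, (List.append_assoc _ _ _).symm⟩
    · exact ⟨x.1.1 ++ x.2.1, rfl⟩
  · rintro ⟨w, hwl, hwp, v, hv, hvub, hvl⟩
    apply Subtype.ext
    simp only
    have hvt : v = w.take i := by
      have := List.prefix_iff_eq_take.mp hv.2.2.1
      rwa [hvl] at this
    have hvd : v = w.drop (n - i) := by
      have := List.suffix_iff_eq_drop.mp hv.2.2.2
      rwa [hwl, hvl] at this
    have key : (w.drop i).take (n - 2 * i) ++ w.take i = w.drop i := by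
      rw [show w.take i = w.drop (n - i) by rw [← hvt, hvd]]
      have h' : i + (n - 2 * i) = n - i := by omega
      rw [← h', ← List.drop_drop]
      exact List.take_append_drop _ _
    conv_lhs => rw [List.append_assoc, key]
    exact List.take_append_drop _ _
  · rintro ⟨⟨x, hxl, hxp, hxub⟩, ⟨m, hm⟩⟩
    refine Prod.ext (Subtype.ext ?_) (Subtype.ext ?_)
    · simp only
      rw [List.append_assoc, List.take_left' hxl]
    · simp only
      rw [List.append_assoc, List.drop_left' hxl, List.take_left' hm]

end Count

/-- Recurrence for `B_k(u,n)` in the case `n > 2p`. -/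
theorem B_recurrence_gt (k n p : ℕ) (hk : 2 ≤ k) (hp : 1 ≤ p) (hpn : p ≤ n)
    (hn2p : n > 2 * p) (u : List (Fin k)) (hu : u.length = p) :
    B k u n = (∑ i ∈ Finset.Icc 1 p, upInd k u i * k ^ (n - p - i))
      + ∑ i ∈ Finset.Icc (p + 1) (n / 2), (k ^ (i - p) - B k u i) * k ^ (n - 2 * i) := by
  subst hu
  have hpn2 : u.length ≤ n / 2 := by
    rw [Nat.le_div_iff_mul_le (by norm_num)]
    omega
  rw [card_partition u n]
  rw [show Finset.Icc 1 u.length = Finset.Ioc 0 u.length from Finset.Icc_add_one_left_eq_Ioc 0 _,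
      show Finset.Icc (u.length + 1) (n / 2) = Finset.Ioc u.length (n / 2) from
        Finset.Icc_add_one_left_eq_Ioc _ _,
      show Finset.Icc 1 (n / 2) = Finset.Ioc 0 (n / 2) from Finset.Icc_add_one_left_eq_Ioc 0 _]
  rw [← Finset.sum_Ioc_consecutive _ (Nat.zero_le u.length) hpn2]
  congr 1
  · refine Finset.sum_congr rfl fun i hi => ?_
    rw [Finset.mem_Ioc] at hi
    exact card_small u n i hp hi.1 hi.2 hn2p
  · refine Finset.sum_congr rfl fun i hi => ?_
    rw [Finset.mem_Ioc] at hi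
    have h2i : 2 * i ≤ n := by
      have := hi.2
      rw [Nat.le_div_iff_mul_le (by norm_num)] at this
      omega
    exact card_large u n i hp hi.1 h2i
end

section
/- Let n ≥ p ≥ 1 and k ≥ 2 be integers, and let u be a length-p word over the alphabet Σ_k = {1,2,...,k}. Let i be an integer with 1 ≤ i ≤ min(p, n-p) such that the length-i prefix of u is unbordered. Then the number of length-n words over Σ_k that have u as a prefix and whose shortest border has length i is exactly k^{n-p-i}. -/
/-- If `1 ≤ i ≤ min(p, n-p)` and the length-`i` prefix of `u` is unbordered,
then the number of length-`n` words with prefix `u` whose shortest border has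
length `i` is `k^(n-p-i)`. -/
theorem count_shortest_border_small (k n p i : ℕ) (hk : 2 ≤ k) (hp : 1 ≤ p)
    (hpn : p ≤ n) (u : List (Fin k)) (hu : u.length = p)
    (hi1 : 1 ≤ i) (hi2 : i ≤ min p (n - p)) (hunb : Unbordered (u.take i)) :
    Nat.card {w : List (Fin k) // w.length = n ∧ u <+: w ∧
        ∃ v, IsShortestBorder v w ∧ v.length = i}
      = k ^ (n - p - i) := by
  have hip : i ≤ p := hi2.trans (min_le_left _ _)
  have hinp : i ≤ n - p := hi2.trans (min_le_right _ _)
  have hpin : p + i ≤ n := by omega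
  set L := n - p - i with hL
  set t : List (Fin k) := u.take i with htdef
  have htlen : t.length = i := by simp [htdef, hu, hip]
  have htne : t ≠ [] := by
    intro h; rw [h] at htlen; simp at htlen; omega
  have htu : t <+: u := List.take_prefix _ _
  -- forward map
  have key : ∀ m : List (Fin k), m.length = L →
      (u ++ m ++ t).length = n ∧ u <+: (u ++ m ++ t) ∧
      ∃ v, IsShortestBorder v (u ++ m ++ t) ∧ v.length = i := by
    intro m hm
    have hwlen : (u ++ m ++ t).length = n := by
      simp [hu, hm, htlen]; omega
    have hupre : u <+: (u ++ m ++ t) := ⟨m ++ t, by simp⟩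
    refine ⟨hwlen, hupre, t, ⟨⟨htne, ?_, htu.trans hupre, ⟨u ++ m, by simp⟩⟩, ?_⟩, htlen⟩
    · rw [hwlen, htlen]; omega
    · intro v hv
      by_contra hlt
      push_neg at hlt
      rw [htlen] at hlt
      obtain ⟨hvne, hvlen, hvpre, hvsuf⟩ := hv
      have hvt_pre : v <+: t := by
        refine List.prefix_of_prefix_length_le hvpre (htu.trans hupre) ?_
        rw [htlen]; omega
      have hvt_suf : v <:+ t := by
        rw [← List.reverse_prefix] at *
        refine List.prefix_of_prefix_length_le hvsuf ⟨(u ++ m).reverse, by simp⟩ ?_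
        simp [htlen]; omega
      exact hunb ⟨v, hvne, by omega, hvt_pre, hvt_suf⟩
  let f : List.Vector (Fin k) L → {w : List (Fin k) // w.length = n ∧ u <+: w ∧
      ∃ v, IsShortestBorder v w ∧ v.length = i} :=
    fun m => ⟨u ++ m.1 ++ t, key m.1 m.2⟩
  have hbij : Function.Bijective f := by
    constructor
    · rintro ⟨m, hm⟩ ⟨m', hm'⟩ h
      have : u ++ m ++ t = u ++ m' ++ t := congrArg Subtype.val h
      apply Subtype.ext
      rw [List.append_assoc, List.append_assoc] at this
      have := List.append_cancel_left this
      exact List.append_cancel_right this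
    · rintro ⟨w, hwlen, hupre, v, ⟨⟨hvne, hvlt, hvpre, hvsuf⟩, hmin⟩, hvi⟩
      -- v equals t
      have hvu : v <+: u := List.prefix_of_prefix_length_le hvpre hupre (by omega)
      have hvt : v = t := by
        rw [List.prefix_iff_eq_take] at hvu
        rw [hvu, hvi, htdef]
      obtain ⟨s, hs⟩ := hvsuf
      have hslen : s.length = n - i := by
        have := congrArg List.length hs
        simp [hwlen, hvi] at this
        omega
      have hus : u <+: s := by
        refine List.prefix_of_prefix_length_le hupre ⟨v, hs⟩ ?_
        rw [hu, hslen]; omega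
      obtain ⟨m, hmeq⟩ := hus
      have hmlen : m.length = L := by
        have := congrArg List.length hmeq
        simp [hu, hslen] at this
        omega
      refine ⟨⟨m, hmlen⟩, ?_⟩
      apply Subtype.ext
      show u ++ m ++ t = w
      rw [← hvt, ← hs, ← hmeq]
  rw [Nat.card_eq_of_bijective f hbij |>.symm, Nat.card_eq_fintype_card, card_vector,
    Fintype.card_fin]
end

section
/- Let n, p, k be integers with k ≥ 2, 1 ≤ p and 2p < n, and let u be a length-p word over the alphabet Σ_k = {1,2,...,k}. Let i be an integer with p+1 ≤ i ≤ ⌊n/2⌋. Then the number of length-n words over Σ_k that have u as a prefix and whose shortest border has length i equals (k^{i-p} - B_k(u,i))·k^{n-2i}. -/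
/-! ### Auxiliary counting lemmas -/

lemma card_len_aux (k m : ℕ) : Nat.card {w : List (Fin k) // w.length = m} = k ^ m := by
  have : Nat.card (List.Vector (Fin k) m) = k ^ m := by
    rw [Nat.card_eq_fintype_card, card_vector, Fintype.card_fin]
  exact this

lemma finite_words_aux {k m : ℕ} (P : List (Fin k) → Prop) :
    Finite {w : List (Fin k) // w.length = m ∧ P w} := by
  have h : {l : List (Fin k) | l.length = m ∧ P l}.Finite :=
    (List.finite_length_eq (Fin k) m).subset (fun l hl => hl.1)
  exact h.to_subtype

lemma card_prefix_aux (k : ℕ) (u : List (Fin k)) (m : ℕ) (h : u.length ≤ m) :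
    Nat.card {w : List (Fin k) // w.length = m ∧ u <+: w} = k ^ (m - u.length) := by
  have e : {w : List (Fin k) // w.length = m ∧ u <+: w} ≃
      {t : List (Fin k) // t.length = m - u.length} :=
  { toFun := fun w => ⟨w.1.drop u.length, by rw [List.length_drop, w.2.1]⟩
    invFun := fun t => ⟨u ++ t.1, by
      refine ⟨?_, List.prefix_append _ _⟩
      have := t.2
      simp only [List.length_append, this]
      omega⟩
    left_inv := fun w => by
      apply Subtype.ext
      have hx := List.prefix_iff_eq_take.mp w.2.2
      conv_rhs => rw [← List.take_append_drop u.length w.1]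
      simp only []
      rw [← hx]
    right_inv := fun t => by
      apply Subtype.ext
      simp only [List.drop_left] }
  rw [Nat.card_congr e, card_len_aux]

lemma card_unbordered_aux (k : ℕ) (u : List (Fin k)) (m : ℕ) (h : u.length ≤ m) :
    Nat.card {w : List (Fin k) // w.length = m ∧ u <+: w ∧ ¬ Bordered w}
      = k ^ (m - u.length) - B k u m := by
  classical
  set P : List (Fin k) → Prop := fun w => w.length = m ∧ u <+: w with hP
  have hfin : Finite {w : List (Fin k) // P w} := finite_words_aux _
  have : Fintype {w : List (Fin k) // P w} := Fintype.ofFinite _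
  have e1 : {w : List (Fin k) // w.length = m ∧ u <+: w ∧ ¬ Bordered w} ≃
      {x : {w : List (Fin k) // P w} // ¬ Bordered x.1} :=
    (Equiv.subtypeEquivRight (fun w => by rw [hP]; simp only []; tauto)).trans
      (Equiv.subtypeSubtypeEquivSubtypeInter P (fun w => ¬ Bordered w)).symm
  have e2 : {w : List (Fin k) // w.length = m ∧ u <+: w ∧ Bordered w} ≃
      {x : {w : List (Fin k) // P w} // Bordered x.1} :=
    (Equiv.subtypeEquivRight (fun w => by rw [hP]; simp only []; tauto)).trans
      (Equiv.subtypeSubtypeEquivSubtypeInter P (fun w => Bordered w)).symm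
  have hT : Fintype.card {w : List (Fin k) // P w} = k ^ (m - u.length) := by
    rw [← Nat.card_eq_fintype_card]
    exact card_prefix_aux k u m h
  have hB : B k u m = Fintype.card {x : {w : List (Fin k) // P w} // Bordered x.1} := by
    rw [← Nat.card_eq_fintype_card]
    exact Nat.card_congr e2
  rw [Nat.card_congr e1, Nat.card_eq_fintype_card, Fintype.card_subtype_compl, hT, hB]

/-- If `2p < n` and `p+1 ≤ i ≤ ⌊n/2⌋`, then the number of length-`n` words with
prefix `u` whose shortest border has length `i` is `(k^(i-p) - B_k(u,i))·k^(n-2i)`. -/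
theorem count_shortest_border_large (k n p i : ℕ) (hk : 2 ≤ k) (hp : 1 ≤ p)
    (h2p : 2 * p < n) (u : List (Fin k)) (hu : u.length = p)
    (hi1 : p + 1 ≤ i) (hi2 : i ≤ n / 2) :
    Nat.card {w : List (Fin k) // w.length = n ∧ u <+: w ∧
        ∃ v, IsShortestBorder v w ∧ v.length = i}
      = (k ^ (i - p) - B k u i) * k ^ (n - 2 * i) := by
  have h2i : 2 * i ≤ n := by omega
  have hin : i < n := by omega
  have hpi : p < i := by omega
  -- the main bijection
  have e : {w : List (Fin k) // w.length = n ∧ u <+: w ∧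
        ∃ v, IsShortestBorder v w ∧ v.length = i} ≃
      {v : List (Fin k) // v.length = i ∧ u <+: v ∧ ¬ Bordered v} ×
      {t : List (Fin k) // t.length = n - 2 * i} :=
  { toFun := fun w =>
      (⟨w.1.take i, by rw [List.length_take, w.2.1]; omega,
        List.prefix_take_iff.mpr ⟨w.2.2.1, by omega⟩, by
        obtain ⟨v, hsb, hvlen⟩ := w.2.2.2
        have hwlen := w.2.1
        have htake : w.1.take i = v := by
          have hx := List.prefix_iff_eq_take.mp hsb.1.2.2.1
          rw [hvlen] at hx
          exact hx.symm
        rw [htake]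
        rintro ⟨b, hb0, hblt, hbpre, hbsuf⟩
        have hbw : IsBorder b w.1 :=
          ⟨hb0, by omega, hbpre.trans hsb.1.2.2.1, hbsuf.trans hsb.1.2.2.2⟩
        have := hsb.2 b hbw
        omega⟩,
       ⟨(w.1.drop i).take (n - 2 * i), by
        rw [List.length_take, List.length_drop, w.2.1]; omega⟩)
    invFun := fun x =>
      ⟨x.1.1 ++ (x.2.1 ++ x.1.1), by
        simp only [List.length_append, x.1.2.1, x.2.2]; omega,
       x.1.2.2.1.trans (List.prefix_append _ _), x.1.1, ⟨⟨by
          intro hnil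
          have := x.1.2.1
          rw [hnil] at this
          simp at this; omega, by
          simp only [List.length_append, x.1.2.1, x.2.2]; omega,
          List.prefix_append _ _, by
          rw [← List.append_assoc]; exact List.suffix_append _ _⟩, by
        intro b hb
        by_contra hlt
        push_neg at hlt
        rw [x.1.2.1] at hlt
        have hbpre : b <+: x.1.1 :=
          List.prefix_of_prefix_length_le hb.2.2.1 (List.prefix_append _ _)
            (by rw [x.1.2.1]; exact le_of_lt hlt)
        have hbsuf : b <:+ x.1.1 := by
          refine List.suffix_of_suffix_length_le hb.2.2.2 ?_
            (by rw [x.1.2.1]; exact le_of_lt hlt)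
          rw [← List.append_assoc]; exact List.suffix_append _ _
        exact x.1.2.2.2 ⟨b, hb.1, by rw [x.1.2.1]; exact hlt, hbpre, hbsuf⟩⟩,
       x.1.2.1⟩
    left_inv := fun w => by
      apply Subtype.ext
      show w.1.take i ++ ((w.1.drop i).take (n - 2 * i) ++ w.1.take i) = w.1
      obtain ⟨v, hsb, hvlen⟩ := w.2.2.2
      have hwlen := w.2.1
      have htake : w.1.take i = v := by
        have hx := List.prefix_iff_eq_take.mp hsb.1.2.2.1
        rw [hvlen] at hx
        exact hx.symm
      have hdrop : w.1.drop (n - i) = v := by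
        have hx := List.suffix_iff_eq_drop.mp hsb.1.2.2.2
        rw [hwlen, hvlen] at hx
        exact hx.symm
      calc w.1.take i ++ ((w.1.drop i).take (n - 2 * i) ++ w.1.take i)
          = (w.1.take i ++ (w.1.drop i).take (n - 2 * i)) ++ w.1.take i := by
            rw [List.append_assoc]
        _ = w.1.take (i + (n - 2 * i)) ++ w.1.take i := by rw [List.take_add]
        _ = w.1.take (n - i) ++ w.1.drop (n - i) := by
            rw [show i + (n - 2 * i) = n - i by omega, htake, hdrop]
        _ = w.1 := List.take_append_drop _ _
    right_inv := fun x => by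
      obtain ⟨⟨v, hvlen, hvpre, hvunb⟩, ⟨t, htlen⟩⟩ := x
      simp only [Prod.mk.injEq]
      constructor
      · apply Subtype.ext
        show (v ++ (t ++ v)).take i = v
        rw [← hvlen, List.take_left]
      · apply Subtype.ext
        show ((v ++ (t ++ v)).drop i).take (n - 2 * i) = t
        have h1 : (v ++ (t ++ v)).drop i = t ++ v := by rw [← hvlen, List.drop_left]
        rw [h1, ← htlen, List.take_left] }
  rw [Nat.card_congr e, Nat.card_prod, card_len_aux,
    card_unbordered_aux k u i (by omega), hu]
end

section
/- Let n, p, k be integers with k ≥ 2 and 1 ≤ p ≤ n ≤ 2p, and let u be a length-p word over the alphabet Σ_k = {1,2,...,k}. Let i be an integer with n-p < i ≤ ⌊n/2⌋ such that the length-i prefix of u is unbordered. Then the number of length-n words over Σ_k that have u as a prefix and whose shortest border has length i is 1 if u has a border of length i-(n-p), and 0 otherwise. -/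
open scoped Classical in
/-- If `1 ≤ p ≤ n ≤ 2p`, `n-p < i ≤ ⌊n/2⌋`, and the length-`i` prefix of `u` is
unbordered, then the number of length-`n` words with prefix `u` whose shortest
border has length `i` is `1` if `u` has a border of length `i-(n-p)`, else `0`. -/
theorem count_shortest_border_overlap (k n p i : ℕ) (hk : 2 ≤ k) (hp : 1 ≤ p)
    (hpn : p ≤ n) (hn2p : n ≤ 2 * p) (u : List (Fin k)) (hu : u.length = p)
    (hi1 : n - p < i) (hi2 : i ≤ n / 2) (hunb : Unbordered (u.take i)) :
    Nat.card {w : List (Fin k) // w.length = n ∧ u <+: w ∧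
        ∃ v, IsShortestBorder v w ∧ v.length = i}
      = if ∃ v, IsBorder v u ∧ v.length = i - (n - p) then 1 else 0 := by
  have h2i : 2 * i ≤ n := by
    have := (Nat.le_div_iff_mul_le (by norm_num : 0 < 2)).mp hi2; omega
  obtain ⟨j, hjdef⟩ : ∃ j, j = i - (n - p) := ⟨_, rfl⟩
  rw [← hjdef]
  have hip : i ≤ p := by omega
  have hi0 : 1 ≤ i := by omega
  have hnip : n - i < p := by omega
  have hj1 : 1 ≤ j := by omega
  have hji : j ≤ i := by omega
  have hjp : j < p := by omega
  have hin : i < n := by omega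
  have hlti : (u.take i).length = i := by rw [List.length_take]; omega
  have hltj : (u.take j).length = j := by rw [List.length_take]; omega
  have hldr : (u.drop (n - i)).length = j := by rw [List.length_drop]; omega
  -- the equation `u.drop (n-i) = u.take j` is equivalent to `u` having a border of length `j`
  have hC : (∃ v, IsBorder v u ∧ v.length = j) ↔ u.drop (n - i) = u.take j := by
    constructor
    · rintro ⟨v, ⟨hne, hlt, hpre, hsuf⟩, hvl⟩
      have h1 : v = u.take j := by rw [List.prefix_iff_eq_take] at hpre; rw [hpre, hvl]
      have h2 : v = u.drop (n - i) := by
        rw [List.suffix_iff_eq_drop] at hsuf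
        rw [hsuf, hvl, hu]
        congr 1; omega
      rw [← h1, ← h2]
    · intro hd
      refine ⟨u.take j, ⟨?_, ?_, List.take_prefix _ _, ?_⟩, hltj⟩
      · intro h; rw [h] at hltj; simp at hltj; omega
      · rw [hltj, hu]; omega
      · rw [← hd]; exact List.drop_suffix _ _
  -- characterize the elements of the set
  have key : ∀ w : List (Fin k),
      (w.length = n ∧ u <+: w ∧ ∃ v, IsShortestBorder v w ∧ v.length = i) ↔
      (u.drop (n - i) = u.take j ∧ w = u ++ (u.take i).drop j) := by
    intro w
    constructor
    · rintro ⟨hlen, hpre, v, ⟨⟨hvne, hvlt, hvp, hvs⟩, _⟩, hvl⟩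
      obtain ⟨x, hx⟩ := hpre
      have hxl : x.length = n - p := by
        have := hlen; rw [← hx, List.length_append, hu] at this; clear hC hunb; omega
      have hv1 : v = u.take i := by
        rw [List.prefix_iff_eq_take] at hvp
        rw [hvp, hvl, ← hx, List.take_append, hu,
          Nat.sub_eq_zero_of_le hip, List.take_zero, List.append_nil]
      have hv2 : v = u.drop (n - i) ++ x := by
        rw [List.suffix_iff_eq_drop] at hvs
        rw [hvs, hvl, hlen, ← hx, List.drop_append, hu,
          Nat.sub_eq_zero_of_le (le_of_lt hnip), List.drop_zero]
      have hmain : u.take i = u.drop (n - i) ++ x := hv1 ▸ hv2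
      have hd : u.drop (n - i) = u.take j := by
        have := congrArg (List.take j) hmain
        rw [List.take_take, min_eq_left hji, List.take_append, hldr,
          Nat.sub_self, List.take_zero, List.append_nil,
          List.take_of_length_le (le_of_eq hldr)] at this
        exact this.symm
      have hxeq : x = (u.take i).drop j := by
        have := congrArg (List.drop j) hmain
        rw [List.drop_append, hldr, Nat.sub_self, List.drop_zero,
          List.drop_of_length_le (le_of_eq hldr), List.nil_append] at this
        exact this.symm
      exact ⟨hd, by rw [← hx, hxeq]⟩
    · rintro ⟨hd, hw⟩
      have hwl : w.length = n := by
        rw [hw, List.length_append, List.length_drop, hlti, hu]; clear hC hunb; omega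
      refine ⟨hwl, hw ▸ List.prefix_append _ _, u.take i, ⟨⟨?_, ?_, ?_, ?_⟩, ?_⟩, hlti⟩
      · intro h; rw [h] at hlti; simp at hlti; omega
      · rw [hlti, hwl]; omega
      · rw [hw]; exact (List.take_prefix i u).trans (List.prefix_append _ _)
      · -- suffix: drop (n - i) w = u.take i
        have : w.drop (n - i) = u.take i := by
          rw [hw, List.drop_append, hu,
            Nat.sub_eq_zero_of_le (le_of_lt hnip), List.drop_zero, hd]
          nth_rw 1 [show u.take j = (u.take i).take j by
            rw [List.take_take, min_eq_left hji]]
          exact List.take_append_drop _ _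
        rw [← this]; exact List.drop_suffix _ _
      · -- minimality
        intro v' hv'
        by_contra hlt'
        push_neg at hlt'
        rw [hlti] at hlt'
        obtain ⟨hne', hl', hp', hs'⟩ := hv'
        have hvi : v'.length < i := hlt'
        apply hunb
        have htpre : u.take i <+: w := by
          rw [hw]; exact (List.take_prefix i u).trans (List.prefix_append _ _)
        have htsuf : u.take i <:+ w := by
          have hsw : w.drop (n - i) = u.take i := by
            rw [hw, List.drop_append, hu,
              Nat.sub_eq_zero_of_le (le_of_lt hnip), List.drop_zero, hd]
            nth_rw 1 [show u.take j = (u.take i).take j by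
              rw [List.take_take, min_eq_left hji]]
            exact List.take_append_drop _ _
          rw [← hsw]; exact List.drop_suffix _ _
        refine ⟨v', hne', by omega, ?_, ?_⟩
        · exact List.prefix_of_prefix_length_le hp' htpre (by rw [hlti]; omega)
        · exact List.suffix_of_suffix_length_le hs' htsuf (by rw [hlti]; omega)
  by_cases hc : ∃ v, IsBorder v u ∧ v.length = j
  · rw [if_pos hc]
    have hd := hC.mp hc
    rw [Nat.card_eq_one_iff_unique]
    constructor
    · exact ⟨fun a b => Subtype.ext (by
        rw [((key a.1).mp a.2).2, ((key b.1).mp b.2).2])⟩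
    · exact ⟨⟨_, (key _).mpr ⟨hd, rfl⟩⟩⟩
  · rw [if_neg hc]
    have : IsEmpty {w : List (Fin k) // w.length = n ∧ u <+: w ∧
        ∃ v, IsShortestBorder v w ∧ v.length = i} :=
      ⟨fun w => hc (hC.mpr ((key w.1).mp w.2).1)⟩
    exact Nat.card_of_isEmpty
end

section
/- Let n ≥ 1 and k ≥ 2 be integers, and let w = w_1 w_2 ... w_n be a length-n unbordered word over Σ_k = {1,2,...,k}. Then the rank of w in the lexicographic listing of all length-n unbordered words over Σ_k satisfies rankU_k(w) = 2 + ∑_{i=1}^{n} (w_i - 1)·k^{n-i} - rankB_k(w), where rankB_k(w) = 1 + ∑_{i=1}^{n} ∑_{c=1}^{w_i - 1} B_k(w_1 w_2 ... w_{i-1} c, n). -/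
/-!
A word `x` of length `n` lies lexicographically below `w` exactly when, for some position `i`,
it agrees with `w` before `i` and carries a letter `c < w i` at `i`; the pair `(i, c)` is
determined by `x`. Hence the words below `w` with any property `P` are counted by summing, over
these pairs, the number of words with prefix `w_1 ⋯ w_{i-1} c` and property `P`. For `P` trivial
each summand is `k ^ (n - i)`, which gives the base-`k` value of `w`; for `P` = bordered the sum
is `rankB_k(w) - 1`; the unbordered words below `w` are the remaining ones.
-/

namespace List

variable {α : Type*} {r : α → α → Prop}

theorem lex_iff_exists_take_append_prefix :
    ∀ {x y : List α}, x.length = y.length →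
      (Lex r x y ↔ ∃ (i : ℕ) (hi : i < y.length) (c : α), r c y[i] ∧ y.take i ++ [c] <+: x)
  | [], y, h => by simp [(length_eq_zero_iff.mp h.symm)]
  | a :: x, [], h => by simp at h
  | a :: x, b :: y, h => by
    rw [cons_lex_cons_iff, lex_iff_exists_take_append_prefix (Nat.succ_injective h)]
    constructor
    · rintro (hab | ⟨rfl, i, hi, c, hc, hx⟩)
      · exact ⟨0, by simp, a, hab, by simp⟩
      · exact ⟨i + 1, by simpa using hi, c, hc, by simpa using hx⟩
    · rintro ⟨_ | i, hi, c, hc, hx⟩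
      · obtain rfl : c = a := by simpa using hx
        exact .inl hc
      · rw [take_succ_cons, cons_append, cons_prefix_cons] at hx
        obtain ⟨rfl, hxy⟩ := hx
        exact .inr ⟨rfl, i, by simpa using hi, c, hc, hxy⟩

theorem not_lt_of_take_append_prefix [Std.Irrefl r] {x y : List α} {i j : ℕ} {c d : α}
    (hi : i < y.length) (hc : r c y[i])
    (hx : y.take i ++ [c] <+: x) (hx' : y.take j ++ [d] <+: x) : ¬ i < j := by
  intro hij
  have hy : y.take i ++ [y[i]] <+: x := by
    rw [take_concat_get' y i hi]
    exact (take_prefix_take_left hij).trans ((prefix_append _ _).trans hx')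
  have := (prefix_of_prefix_length_le hx hy (by simp [hi])).eq_of_length (by simp; omega)
  simp only [append_cancel_left_eq, cons.injEq, and_true] at this
  exact irrefl _ (this ▸ hc)

theorem eq_of_take_append_prefix [Std.Irrefl r] {x y : List α} {i j : ℕ} {c d : α}
    (hi : i < y.length) (hj : j < y.length) (hc : r c y[i]) (hd : r d y[j])
    (hx : y.take i ++ [c] <+: x) (hx' : y.take j ++ [d] <+: x) : i = j ∧ c = d := by
  obtain rfl : i = j := by
    have := not_lt_of_take_append_prefix hi hc hx hx'
    have := not_lt_of_take_append_prefix hj hd hx' hx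
    omega
  simpa using (prefix_of_prefix_length_le hx hx' (by simp)).eq_of_length (by simp)

end List

section Counting

open Finset

variable {α : Type*} [Fintype α] {n : ℕ}

instance finite_length_eq_and (P : List α → Prop) :
    Finite {x : List α // x.length = n ∧ P x} :=
  Finite.of_injective (β := List.Vector α n) (fun x => ⟨x.1, x.2.1⟩)
    fun _ _ h => Subtype.ext (by simpa using congrArg Subtype.val h)

theorem card_length_eq_and_prefix {u : List α} (hu : u.length ≤ n) :
    Nat.card {x : List α // x.length = n ∧ u <+: x} = Fintype.card α ^ (n - u.length) := by
  rw [← card_vector, ← Nat.card_eq_fintype_card]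
  exact Nat.card_congr
    { toFun := fun x => ⟨x.1.drop u.length, by rw [List.length_drop, x.2.1]⟩
      invFun := fun v => ⟨u ++ v.1, by simp [v.2]; omega, List.prefix_append _ _⟩
      left_inv := by
        rintro ⟨x, -, t, rfl⟩
        simp
      right_inv := by
        rintro ⟨v, -⟩
        simp only [List.drop_left']
        rfl }

theorem card_length_eq_and_not_add_card (R C : List α → Prop) :
    Nat.card {x : List α // x.length = n ∧ ¬ R x ∧ C x} +
        Nat.card {x : List α // x.length = n ∧ R x ∧ C x} =
      Nat.card {x : List α // x.length = n ∧ C x} := by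
  classical
  rw [← Nat.card_sum]
  exact Nat.card_congr
    { toFun := Sum.elim (fun x => ⟨x.1, x.2.1, x.2.2.2⟩) (fun x => ⟨x.1, x.2.1, x.2.2.2⟩)
      invFun := fun x =>
        if h : R x.1 then .inr ⟨x.1, x.2.1, h, x.2.2⟩ else .inl ⟨x.1, x.2.1, h, x.2.2⟩
      left_inv := by rintro (x | x) <;> simp [x.2.2.1]
      right_inv := fun x => by by_cases h : R x.1 <;> simp [h] }

variable [LinearOrder α]

theorem card_lex_lt_ofFn_eq_sum_card_prefix (w : Fin n → α) (P : List α → Prop) :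
    Nat.card {x : List α // x.length = n ∧ P x ∧ List.Lex (· < ·) x (List.ofFn w)} =
      ∑ i : Fin n, ∑ c ∈ univ.filter (· < w i),
        Nat.card {x : List α // x.length = n ∧ (List.ofFn w).take i ++ [c] <+: x ∧ P x} := by
  let fiber (p : Fin n × α) :=
    {x : List α // x.length = n ∧ (List.ofFn w).take p.1 ++ [p.2] <+: x ∧ P x}
  have hsum : ∑ i : Fin n, ∑ c ∈ univ.filter (· < w i), Nat.card (fiber (i, c)) =
      ∑ p : {p : Fin n × α // p.2 < w p.1}, Nat.card (fiber p) := by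
    rw [← sum_subtype (univ.filter fun p : Fin n × α => p.2 < w p.1) (fun _ => by simp)
      (fun p => Nat.card (fiber p)), sum_filter, Fintype.sum_prod_type]
    simp only [sum_filter]
  have lex_of_mem_fiber (q : Σ p : {p : Fin n × α // p.2 < w p.1}, fiber p) :
      List.Lex (· < ·) q.2.1 (List.ofFn w) :=
    (List.lex_iff_exists_take_append_prefix (by simp [q.2.2.1])).mpr
      ⟨q.1.1.1, by simp, q.1.1.2, by simpa using q.1.2, q.2.2.2.1⟩
  rw [hsum, ← Nat.card_sigma]
  refine (Nat.card_eq_of_bijective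
    (fun q => ⟨q.2.1, q.2.2.1, q.2.2.2.2, lex_of_mem_fiber q⟩) ⟨?_, ?_⟩).symm
  · rintro ⟨⟨⟨i, c⟩, hc⟩, x, _, hx, _⟩ ⟨⟨⟨j, d⟩, hd⟩, x', _, hx', _⟩ h
    obtain rfl : x = x' := congrArg Subtype.val h
    obtain ⟨hij, rfl⟩ := List.eq_of_take_append_prefix (by simp) (by simp)
      (by simpa using hc) (by simpa using hd) hx hx'
    obtain rfl : i = j := Fin.ext hij
    rfl
  · rintro ⟨x, hx, hP, hlex⟩
    obtain ⟨i, hi, c, hc, hpre⟩ :=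
      (List.lex_iff_exists_take_append_prefix (by simp [hx])).mp hlex
    exact ⟨⟨⟨(⟨i, by simpa using hi⟩, c), by simpa using hc⟩, x, hx, hpre, hP⟩, rfl⟩

theorem card_lex_lt_ofFn_eq_sum_mul_pow {k : ℕ} (w : Fin n → Fin k) :
    Nat.card {x : List (Fin k) // x.length = n ∧ List.Lex (· < ·) x (List.ofFn w)} =
      ∑ i : Fin n, (w i : ℕ) * k ^ (n - 1 - i) := by
  have h := card_lex_lt_ofFn_eq_sum_card_prefix w fun _ => True
  simp only [true_and, and_true] at h
  rw [h]
  refine sum_congr rfl fun i _ => ?_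
  have hfiber (c : Fin k) : Nat.card {x : List (Fin k) // x.length = n ∧
      (List.ofFn w).take i ++ [c] <+: x} = k ^ (n - 1 - i) := by
    have hlen : ((List.ofFn w).take i ++ [c]).length = i + 1 := by simp
    rw [card_length_eq_and_prefix (by omega), hlen, Fintype.card_fin]
    congr 1
    omega
  rw [sum_congr rfl fun c _ => hfiber c, sum_const, smul_eq_mul, filter_gt_eq_Iio,
    Fin.card_Iio]

end Counting

/-- Letters of `Σ_k = {1,…,k}` are modelled by `Fin k = {0,…,k-1}`, so
`w_i - 1` becomes `(w i : ℕ)`. -/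
theorem rankU_formula_general (k n : ℕ) (w : Fin n → Fin k) :
    1 + Nat.card {x : List (Fin k) // x.length = n ∧ Unbordered x ∧
        List.Lex (· < ·) x (List.ofFn w)}
      = 2 + (∑ i : Fin n, (w i : ℕ) * k ^ (n - 1 - (i : ℕ)))
        - (1 + ∑ i : Fin n, ∑ c ∈ Finset.univ.filter (fun c : Fin k => c < w i),
            B k ((List.ofFn w).take i ++ [c]) n) := by
  have hsplit := card_length_eq_and_not_add_card (n := n) Bordered
    fun x : List (Fin k) => List.Lex (· < ·) x (List.ofFn w)
  have hall := card_lex_lt_ofFn_eq_sum_mul_pow w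
  have hbordered := card_lex_lt_ofFn_eq_sum_card_prefix w Bordered
  unfold Unbordered B
  omega

/-- Ranking unbordered words: for a length-`n` unbordered word `w`,
`rankU_k(w) = 2 + ∑_{i=1}^{n} (w_i - 1)·k^{n-i} - rankB_k(w)`, where
`rankU_k(w)` is `1` plus the number of length-`n` unbordered words
lexicographically smaller than `w`, and
`rankB_k(w) = 1 + ∑_{i=1}^{n} ∑_{c < w_i} B_k(w_1 ⋯ w_{i-1} c, n)`.
(Letters of `Σ_k = {1,…,k}` are modelled by `Fin k = {0,…,k-1}`, so
`w_i - 1` becomes `(w i : ℕ)`.) -/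
theorem rankU_formula (k n : ℕ) (hk : 2 ≤ k) (hn : 1 ≤ n) (w : Fin n → Fin k)
    (hub : Unbordered (List.ofFn w)) :
    1 + Nat.card {x : List (Fin k) // x.length = n ∧ Unbordered x ∧
        List.Lex (· < ·) x (List.ofFn w)}
      = 2 + (∑ i : Fin n, (w i : ℕ) * k ^ (n - 1 - (i : ℕ)))
        - (1 + ∑ i : Fin n, ∑ c ∈ Finset.univ.filter (fun c : Fin k => c < w i),
            B k ((List.ofFn w).take i ++ [c]) n) :=
  rankU_formula_general k n w
end

section
/- Let w be a word of length n with prefix u of length p where n ≤ 2p, and let i be an integer with n - p < i ≤ n - 1. If w has a border of length i, then u has a border of length i - (n - p). -/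
/-- If a length-`n` word `w` with a length-`p` prefix `u` (where `n ≤ 2p`) has a
border of length `i` with `n - p < i ≤ n - 1`, then `u` has a border of length
`i - (n - p)`. -/
theorem border_of_prefix_overlap {α : Type*} (n p i : ℕ) (w u : List α)
    (hw : w.length = n) (hu : u.length = p) (hpre : u <+: w) (hn2p : n ≤ 2 * p)
    (hi1 : n - p < i) (hi2 : i ≤ n - 1)
    (hb : ∃ v, IsBorder v w ∧ v.length = i) :
    ∃ v, IsBorder v u ∧ v.length = i - (n - p) := by
  obtain ⟨v, ⟨hvne, hvlt, hvpre, hvsuf⟩, hvlen⟩ := hb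
  have hpn : p ≤ n := by
    have := hpre.length_le; omega
  have hin : i < n := by omega
  set m : ℕ := i - (n - p) with hm
  refine ⟨v.take m, ⟨?_, ?_, ?_, ?_⟩, ?_⟩
  · -- nonempty
    have : (v.take m).length = m := by
      rw [List.length_take]; omega
    intro h
    rw [h] at this
    simp at this
    omega
  · rw [List.length_take]; omega
  · -- prefix of u
    have h1 : v.take m <+: w := (List.take_prefix m v).trans hvpre
    exact List.prefix_of_prefix_length_le h1 hpre (by rw [List.length_take]; omega)
  · -- suffix of u
    obtain ⟨t, ht⟩ := hpre
    have htlen : t.length = n - p := by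
      have := congrArg List.length ht
      simp at this; omega
    have hdropsuf : v.drop m <:+ w := (List.drop_suffix m v).trans hvsuf
    have htsuf : t <:+ w := ⟨u, ht⟩
    have hdt : v.drop m = t := by
      have h1 : v.drop m <:+ t := List.suffix_of_suffix_length_le hdropsuf htsuf
        (by rw [List.length_drop]; omega)
      exact h1.eq_of_length (by rw [List.length_drop]; omega)
    obtain ⟨s, hs⟩ := hvsuf
    have : (s ++ v.take m) ++ t = u ++ t := by
      rw [List.append_assoc, ← hdt, List.take_append_drop, hs, hdt, ← ht]
    exact ⟨s, List.append_cancel_right this⟩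
  · rw [List.length_take]; omega
end
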